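/- arXiv:2601.01334 — 8 statements merged into one kernel-verified Lean document; each statement's English description precedes it below -/
import Mathlib

section
/- The 'if' direction of the main theorem: if for every combination (u_1,...,u_n) of individual utility functions (one u_i from each set U_i) there exists a social utility function u_0 in U_0 with u_0 = Σ_i α_i u_i + β for some nonzero nonnegative weight vector α and constant β, then the Pareto-star principle holds: for all lotteries l, l', if for every individual i there is some u_i ∈ U_i whose expected utility strictly prefers l' to l, then there is some u_0 ∈ U_0 whose expected utility strictly prefers l' to l. -/
open Finset

/-- Expected utility of lottery `l` with utility `u`. -/
def EU {Z : Type*} [Fintype Z] (l u : Z → ℝ) : ℝ := ∑ z, l z * u z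

/-- `l` is a lottery (probability distribution) on `Z`. -/
def IsLottery {Z : Type*} [Fintype Z] (l : Z → ℝ) : Prop :=
  (∀ z, 0 ≤ l z) ∧ ∑ z, l z = 1

/-- Expected multi-utility preference: `l ≿ l'` under the set `U`. -/
def Pref {Z : Type*} [Fintype Z] (U : Set (Z → ℝ)) (l l' : Z → ℝ) : Prop :=
  ∀ u ∈ U, EU l' u ≤ EU l u

/-- `u` is nonconstant. -/
def Nonconst {Z : Type*} (u : Z → ℝ) : Prop := ∃ z z', u z ≠ u z'


theorem pareto_star_if
    {Z : Type*} [Fintype Z] [Nonempty Z] {n : ℕ}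
    (U : Fin n → Set (Z → ℝ)) (U₀ : Set (Z → ℝ))
    (hU : ∀ i, (U i).Nonempty) (hU₀ : U₀.Nonempty)
    (hrep : ∀ u : Fin n → (Z → ℝ), (∀ i, u i ∈ U i) →
      ∃ u₀ ∈ U₀, ∃ α : Fin n → ℝ, ∃ β : ℝ,
        (∀ i, 0 ≤ α i) ∧ α ≠ 0 ∧ u₀ = fun z => (∑ i, α i * u i z) + β) :
    ∀ l l' : Z → ℝ, IsLottery l → IsLottery l' →
      (∀ i, ∃ u ∈ U i, EU l u < EU l' u) →
      ∃ u₀ ∈ U₀, EU l u₀ < EU l' u₀ := by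
  intro l l' hl hl' hpar
  choose u hu hlt using hpar
  obtain ⟨u₀, hu₀, α, β, hα, hαne, hrep⟩ := hrep u hu
  refine ⟨u₀, hu₀, ?_⟩
  have key : ∀ m : Z → ℝ, IsLottery m →
      EU m u₀ = (∑ i, α i * EU m (u i)) + β := by
    intro m hm
    simp only [hrep, EU]
    rw [Finset.sum_congr rfl (fun z _ => mul_add (m z) _ β)]
    rw [Finset.sum_add_distrib, ← Finset.sum_mul, hm.2, one_mul]
    congr 1
    simp only [Finset.mul_sum]
    rw [Finset.sum_comm]
    refine Finset.sum_congr rfl fun i _ => Finset.sum_congr rfl fun z _ => by ring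
  rw [key l hl, key l' hl']
  have : ∃ j, α j ≠ 0 := by
    by_contra h
    push_neg at h
    exact hαne (funext h)
  obtain ⟨j, hj⟩ := this
  have hjpos : 0 < α j := lt_of_le_of_ne (hα j) (Ne.symm hj)
  have : (∑ i, α i * EU l (u i)) < ∑ i, α i * EU l' (u i) := by
    refine Finset.sum_lt_sum (fun i _ => mul_le_mul_of_nonneg_left (hlt i).le (hα i)) ?_
    exact ⟨j, Finset.mem_univ j, mul_lt_mul_of_pos_left (hlt j) hjpos⟩
  linarith
end

section
/- If two nonnegative-weighted affine combinations of utility functions from a profile with a no-conflict pair sum to a constant with both having a nonzero weight vector, a contradiction arises; formally: if (U_1,...,U_n) has a no-conflict pair, A = { Σ_i α_i u_i + β·1 : α ∈ ℝ^n_{≥0}, β ∈ ℝ } for a fixed combination (u_1,...,u_n) ∈ Π_i U_i, then every element of A ∩ (−A) is a constant function, i.e., A ∩ (−A) = { γ·1 : γ ∈ ℝ }. -/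
open Finset

theorem cone_inter_neg_eq_constants
    {Z : Type*} [Fintype Z] {n : ℕ}
    (U : Fin n → Set (Z → ℝ)) (u : Fin n → (Z → ℝ)) (hu : ∀ i, u i ∈ U i)
    (hnc : ∃ zs zi : Z, ∀ i, ∀ v ∈ U i, v zi < v zs)
    (A : Set (Z → ℝ))
    (hA : A = {φ | ∃ α : Fin n → ℝ, ∃ β : ℝ, (∀ i, 0 ≤ α i) ∧
      φ = fun z => (∑ i, α i * u i z) + β}) :
    A ∩ {φ | -φ ∈ A} = {φ | ∃ γ : ℝ, φ = fun _ => γ} := by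
  obtain ⟨zs, zi, hlt⟩ := hnc
  subst hA
  ext φ
  constructor
  · rintro ⟨⟨α, β, hα, hφ⟩, α', β', hα', hφ'⟩
    -- sum equation: for all z, ∑ (α i + α' i) * u i z + (β + β') = 0
    have hsum : ∀ z, (∑ i, (α i + α' i) * u i z) + (β + β') = 0 := by
      intro z
      have h1 : φ z = (∑ i, α i * u i z) + β := by rw [hφ]
      have h2 : -φ z = (∑ i, α' i * u i z) + β' := by
        have := congrFun hφ' z; simpa using this
      have : (∑ i, α i * u i z) + β + ((∑ i, α' i * u i z) + β') = 0 := by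
        rw [← h1, ← h2]; ring
      simp only [add_mul, Finset.sum_add_distrib]
      linarith
    have key : ∀ z z', (∑ i, (α i + α' i) * (u i z - u i z')) = 0 := by
      intro z z'
      have := hsum z
      have := hsum z'
      have : (∑ i, (α i + α' i) * u i z) = ∑ i, (α i + α' i) * u i z' := by
        linarith [hsum z, hsum z']
      simp only [mul_sub, Finset.sum_sub_distrib]
      linarith
    have hz : ∀ i, α i + α' i = 0 := by
      have h0 := key zs zi
      have hnn : ∀ i ∈ Finset.univ, 0 ≤ (α i + α' i) * (u i zs - u i zi) := by
        intro i _
        have := hlt i (u i) (hu i)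
        have : 0 ≤ u i zs - u i zi := by linarith
        have hαi : 0 ≤ α i + α' i := by have := hα i; have := hα' i; linarith
        positivity
      have hall := (Finset.sum_eq_zero_iff_of_nonneg hnn).mp h0
      intro i
      have := hall i (Finset.mem_univ i)
      have hgt := hlt i (u i) (hu i)
      have : u i zs - u i zi ≠ 0 := by linarith
      rcases mul_eq_zero.mp (hall i (Finset.mem_univ i)) with h | h
      · exact h
      · exact absurd h this
    have hα0 : ∀ i, α i = 0 := by
      intro i
      have := hz i; have := hα i; have := hα' i; linarith
    refine ⟨β, ?_⟩
    funext z
    rw [hφ]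
    simp [hα0]
  · rintro ⟨γ, rfl⟩
    refine ⟨⟨fun _ => 0, γ, fun i => le_refl 0, by funext z; simp⟩,
            ⟨fun _ => 0, -γ, fun i => le_refl 0, by funext z; simp⟩⟩
end

section
/- Main theorem (only-if direction): Suppose each agent i ∈ {0,1,...,n} has an expected multi-utility preference given by a nonempty compact convex set U_i of nonconstant functions Z → ℝ, and (U_1,...,U_n) has a no-conflict pair with U_0 also respecting it (i.e., u(z*) > u(z_*) for all u ∈ ∪_{i=0}^n U_i). If the Pareto-star principle holds, then for every combination (u_1,...,u_n) ∈ Π_{i=1}^n U_i there exist u_0 ∈ U_0, a nonzero vector α ∈ ℝ^n_{≥0}, and β ∈ ℝ such that u_0 = Σ_{i=1}^n α_i u_i + β·1. -/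
open Finset

/-!
If no `u₀ ∈ U₀` were a nonnegative combination of the `uᵢ` plus a constant, `U₀` would miss the
cone generated by the `uᵢ` and `±1`, which is closed because it is finitely generated (conic
Carathéodory). Separating the compact convex set `U₀` from this cone gives a linear functional
that vanishes on constants, is `≥ 0` at every `uᵢ` and `< 0` on `U₀`. Tilting it slightly
towards `w ↦ w z* - w z_*` makes it `> 0` at every `uᵢ` while, by compactness, it stays `< 0`
on `U₀`. A functional vanishing on constants is a positive multiple of `EU l - EU l'` for two
lotteries `l, l'`; then `uᵢ` ranks `l` strictly above `l'` for every agent `i`, whereas every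
utility in `U₀` ranks `l'` weakly above `l`, contradicting Pareto-star.
-/

open Set Topology

namespace PointedCone

variable {E : Type*} [AddCommGroup E] [Module ℝ E]

lemma mem_hull_range_iff {ι : Type*} [Fintype ι] {v : ι → E} {x : E} :
    x ∈ hull ℝ (range v) ↔ ∃ c : ι → ℝ, 0 ≤ c ∧ ∑ i, c i • v i = x := by
  rw [Submodule.mem_span_range_iff_exists_fun]
  constructor
  · rintro ⟨c, rfl⟩
    exact ⟨fun i => c i, fun i => (c i).2, rfl⟩
  · rintro ⟨c, hc, rfl⟩
    exact ⟨fun i => ⟨c i, hc i⟩, rfl⟩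

lemma mem_hull_finset_iff {s : Finset E} {x : E} :
    x ∈ hull ℝ (s : Set E) ↔ ∃ c : E → ℝ, (∀ y ∈ s, 0 ≤ c y) ∧ ∑ y ∈ s, c y • y = x := by
  classical
  rw [Submodule.mem_span_finset]
  constructor
  · rintro ⟨c, -, rfl⟩
    exact ⟨fun y => c y, fun y _ => (c y).2, rfl⟩
  · rintro ⟨c, hc, rfl⟩
    refine ⟨fun y => if h : y ∈ s then ⟨c y, hc y h⟩ else 0, fun y hy => ?_,
      Finset.sum_congr rfl fun y hy => by simp [hy]⟩
    by_contra h
    exact hy (dif_neg h)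

lemma hull_subset_iUnion_hull_erase [DecidableEq E] {s : Finset E}
    (hs : ¬ LinearIndepOn ℝ id (s : Set E)) :
    (hull ℝ (s : Set E) : Set E) ⊆ ⋃ y ∈ s, (hull ℝ (s.erase y : Set E) : Set E) := by
  intro x hx
  obtain ⟨c, hc, rfl⟩ := mem_hull_finset_iff.mp hx
  obtain ⟨g, hg, hpos⟩ : ∃ g : E → ℝ, ∑ y ∈ s, g y • y = 0 ∧ ∃ y ∈ s, 0 < g y := by
    simp only [linearIndepOn_finset_iff, id, not_forall] at hs
    obtain ⟨g, hg, y, hy, hgy⟩ := hs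
    rcases (Ne.symm hgy).lt_or_gt with h | h
    · exact ⟨g, hg, y, hy, h⟩
    · exact ⟨-g, by simp [neg_smul, Finset.sum_neg_distrib, hg], y, hy, by simpa using h⟩
  obtain ⟨y₀, hy₀, hmin⟩ := (s.filter (0 < g ·)).exists_min_image (fun y => c y / g y)
    (by simpa [Finset.filter_nonempty_iff] using hpos)
  rw [Finset.mem_filter] at hy₀
  -- Move the coefficients along the dependence `g` until the first one, at `y₀`, reaches zero.
  set t := c y₀ / g y₀
  have ht : 0 ≤ t := div_nonneg (hc y₀ hy₀.1) hy₀.2.le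
  have hcoef : ∀ y ∈ s, 0 ≤ c y - t * g y := by
    intro y hy
    rcases le_or_gt (g y) 0 with h | h
    · nlinarith [hc y hy]
    · have := hmin y (Finset.mem_filter.mpr ⟨hy, h⟩)
      rw [le_div_iff₀ h] at this
      linarith
  refine mem_biUnion hy₀.1 (mem_hull_finset_iff.mpr
    ⟨fun y => c y - t * g y, fun y hy => hcoef y (Finset.mem_of_mem_erase hy), ?_⟩)
  rw [Finset.sum_erase s (by simp [t, div_mul_cancel₀ _ hy₀.2.ne'])]
  simp only [sub_smul, Finset.sum_sub_distrib, mul_smul, ← Finset.smul_sum, hg, smul_zero,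
    sub_zero]

variable [TopologicalSpace E] [IsTopologicalAddGroup E] [ContinuousSMul ℝ E] [T2Space E]

lemma isClosed_hull_range_of_linearIndependent {ι : Type*} [Fintype ι] {v : ι → E}
    (hv : LinearIndependent ℝ v) : IsClosed (hull ℝ (range v) : Set E) := by
  have hL : Topology.IsClosedEmbedding (Fintype.linearCombination ℝ v) :=
    LinearMap.isClosedEmbedding_of_injective (LinearMap.ker_eq_bot.mpr
      (linearIndependent_iff_injective_fintypeLinearCombination.mp hv))
  have : (hull ℝ (range v) : Set E) = Fintype.linearCombination ℝ v '' Ici 0 := by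
    ext x
    simp [mem_hull_range_iff, Fintype.linearCombination_apply]
  rw [this]
  exact hL.isClosedMap _ isClosed_Ici

lemma isClosed_hull_of_finite {s : Set E} (hs : s.Finite) : IsClosed (hull ℝ s : Set E) := by
  classical
  lift s to Finset E using hs
  induction s using Finset.strongInduction with
  | H s ih =>
  by_cases hs : LinearIndepOn ℝ id (s : Set E)
  · rw [← Subtype.range_coe (s := (s : Set E))]
    exact isClosed_hull_range_of_linearIndependent hs
  · have hcover : (hull ℝ (s : Set E) : Set E) = ⋃ y ∈ s, (hull ℝ (s.erase y : Set E) : Set E) :=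
      (hull_subset_iUnion_hull_erase hs).antisymm <| iUnion₂_subset fun y _ =>
        Submodule.span_mono (Finset.coe_subset.mpr (s.erase_subset y))
    rw [hcover]
    exact s.finite_toSet.isClosed_biUnion fun y hy => ih _ (Finset.erase_ssubset hy)

end PointedCone

lemma IsCompact.exists_pos_forall_add_mul_lt_zero {X : Type*} [TopologicalSpace X] {K : Set X}
    (hK : IsCompact K) {f g : X → ℝ} (hf : Continuous f) (hg : Continuous g)
    (hfK : ∀ x ∈ K, f x < 0) : ∃ ε > 0, ∀ x ∈ K, f x + ε * g x < 0 := by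
  have : ∀ᶠ ε in 𝓝 (0 : ℝ), ∀ x ∈ K, f x + ε * g x < 0 :=
    hK.eventually_forall_of_forall_eventually fun x hx =>
      (isOpen_lt (by fun_prop) continuous_const).mem_nhds (by simpa using hfK x hx)
  obtain ⟨ε, hε, hεpos⟩ := ((this.filter_mono nhdsWithin_le_nhds).and
    (self_mem_nhdsWithin (s := Ioi 0))).exists
  exact ⟨ε, hεpos, hε⟩

lemma exists_isLottery_eu_sub_eq {Z : Type*} [Fintype Z] [Nonempty Z] (F : (Z → ℝ) →ₗ[ℝ] ℝ)
    (hF : F 1 = 0) :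
    ∃ l l' : Z → ℝ, IsLottery l ∧ IsLottery l' ∧ ∃ c > 0, ∀ w, EU l w - EU l' w = c * F w := by
  classical
  set g : Z → ℝ := fun z => F fun j => if z = j then 1 else 0
  have hFg : ∀ w, F w = ∑ z, (g z)⁺ * w z - ∑ z, (g z)⁻ * w z := by
    intro w
    rw [F.pi_apply_eq_sum_univ w, ← Finset.sum_sub_distrib]
    refine Finset.sum_congr rfl fun z _ => ?_
    rw [← sub_mul, posPart_sub_negPart, smul_eq_mul, mul_comm]
  have hsum : ∑ z, (g z)⁻ = ∑ z, (g z)⁺ := by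
    have h := hFg 1
    simp only [hF, Pi.one_apply, mul_one] at h
    linarith
  -- `l`, `l'` are the positive and negative parts of the density `g` of `F`, each shifted by `1`
  -- so that the normalisation `N` is positive even when `F = 0`.
  set N := ∑ z, ((g z)⁺ + 1)
  have hN : 0 < N := Finset.sum_pos (fun z _ => by linarith [posPart_nonneg (g z)])
    Finset.univ_nonempty
  refine ⟨fun z => ((g z)⁺ + 1) / N, fun z => ((g z)⁻ + 1) / N,
    ⟨fun z => div_nonneg (by linarith [posPart_nonneg (g z)]) hN.le, ?_⟩,
    ⟨fun z => div_nonneg (by linarith [negPart_nonneg (g z)]) hN.le, ?_⟩,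
    N⁻¹, inv_pos.mpr hN, fun w => ?_⟩
  · rw [← Finset.sum_div, div_self hN.ne']
  · rw [← Finset.sum_div, Finset.sum_add_distrib, hsum, ← Finset.sum_add_distrib, div_self hN.ne']
  · simp only [EU, hFg, div_mul_eq_mul_div, ← Finset.sum_div, add_mul, one_mul,
      Finset.sum_add_distrib]
    ring

lemma eq_sum_add_const_of_mem_hull {Z ι : Type*} [Fintype ι] {v : ι → Z → ℝ} {x : Z → ℝ}
    (hx : x ∈ PointedCone.hull ℝ (range (Sum.elim v ![1, -1]))) :
    ∃ α : ι → ℝ, (∀ i, 0 ≤ α i) ∧ ∃ β : ℝ, x = fun z => ∑ i, α i * v i z + β := by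
  obtain ⟨c, hc, rfl⟩ := PointedCone.mem_hull_range_iff.mp hx
  refine ⟨fun i => c (.inl i), fun i => hc _, c (.inr 0) - c (.inr 1), ?_⟩
  ext z
  simp only [Finset.sum_apply, Pi.smul_apply, smul_eq_mul, Fintype.sum_sum_type, Sum.elim_inl,
    Sum.elim_inr, Fin.sum_univ_two, Matrix.cons_val_zero, Matrix.cons_val_one, Pi.one_apply,
    Pi.neg_apply]
  ring

lemma exists_strongDual_of_forall_ne_sum_add_const {Z ι : Type*} [Fintype ι] (v : ι → Z → ℝ)
    {K : Set (Z → ℝ)} (hKcpt : IsCompact K) (hKcvx : Convex ℝ K)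
    (hK : ∀ a ∈ K, ∀ α : ι → ℝ, (∀ i, 0 ≤ α i) → ∀ β : ℝ, a ≠ fun z => ∑ i, α i * v i z + β) :
    ∃ f : StrongDual ℝ (Z → ℝ), f 1 = 0 ∧ (∀ i, 0 ≤ f (v i)) ∧ ∀ a ∈ K, f a < 0 := by
  let C : ProperCone ℝ (Z → ℝ) :=
    ⟨PointedCone.hull ℝ (range (Sum.elim v ![1, -1])),
      PointedCone.isClosed_hull_of_finite (finite_range _)⟩
  have hdisj : Disjoint K C := disjoint_left.mpr fun a ha haC => by
    obtain ⟨α, hα, β, rfl⟩ := eq_sum_add_const_of_mem_hull haC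
    exact hK _ ha α hα β rfl
  obtain ⟨f, hfC, hfK⟩ := C.hyperplane_separation hKcvx hKcpt hdisj
  have hgen : ∀ j, 0 ≤ f (Sum.elim v ![1, -1] j) :=
    fun j => hfC _ (PointedCone.subset_hull (mem_range_self j))
  refine ⟨f, ?_, fun i => hgen (.inl i), hfK⟩
  have h₁ := hgen (.inr 0)
  have h₂ := hgen (.inr 1)
  simp only [Sum.elim_inr, Matrix.cons_val_zero, Matrix.cons_val_one, map_neg] at h₁ h₂
  linarith

theorem pareto_star_only_if_general
    {Z : Type*} [Fintype Z] [Nonempty Z] {n : ℕ}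
    (U : Fin n → Set (Z → ℝ)) (U₀ : Set (Z → ℝ))
    (hU₀cpt : IsCompact U₀)
    (hU₀cvx : Convex ℝ U₀)
    (hU₀nc : ∀ u ∈ U₀, Nonconst u)
    (hnc : ∃ zs zi : Z, (∀ i, ∀ u ∈ U i, u zi < u zs) ∧ (∀ u ∈ U₀, u zi < u zs))
    (hps : ∀ l l' : Z → ℝ, IsLottery l → IsLottery l' →
      (∀ i, ¬ Pref (U i) l l') → ¬ Pref U₀ l l') :
    ∀ u : Fin n → (Z → ℝ), (∀ i, u i ∈ U i) →
      ∃ u₀ ∈ U₀, ∃ α : Fin n → ℝ, ∃ β : ℝ,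
        (∀ i, 0 ≤ α i) ∧ α ≠ 0 ∧ u₀ = fun z => (∑ i, α i * u i z) + β := by
  intro u hu
  by_contra! hnot
  obtain ⟨zs, zi, hUs, -⟩ := hnc
  obtain ⟨f, hf1, hfu, hfU₀⟩ := exists_strongDual_of_forall_ne_sum_add_const u hU₀cpt hU₀cvx <| by
    rintro a ha α hα β rfl
    by_cases h0 : α = 0
    · obtain ⟨z, z', h⟩ := hU₀nc _ ha
      simp [h0] at h
    · exact hnot _ ha α β hα h0 rfl
  obtain ⟨ε, hε, hεU₀⟩ := hU₀cpt.exists_pos_forall_add_mul_lt_zero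
    (g := fun w => w zs - w zi) f.continuous (by fun_prop) hfU₀
  let F : (Z → ℝ) →ₗ[ℝ] ℝ := f.toLinearMap + ε • (.proj zs - .proj zi)
  have hF : ∀ w, F w = f w + ε * (w zs - w zi) := fun w => rfl
  obtain ⟨l, l', hl, hl', c, hc, hEU⟩ := exists_isLottery_eu_sub_eq F (by simp [hF, hf1])
  refine hps l' l hl' hl (fun i hi => ?_) (fun a ha => ?_)
  · have hpos : 0 < F (u i) := by
      rw [hF]
      nlinarith [hfu i, hUs i _ (hu i)]
    linarith [hEU (u i), hi (u i) (hu i), mul_pos hc hpos]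
  · have hneg : F a < 0 := (hF a).trans_lt (hεU₀ a ha)
    show EU l a ≤ EU l' a
    linarith [hEU a, mul_neg_of_pos_of_neg hc hneg]

theorem pareto_star_only_if
    {Z : Type*} [Fintype Z] [Nonempty Z] {n : ℕ} (hn : 0 < n)
    (U : Fin n → Set (Z → ℝ)) (U₀ : Set (Z → ℝ))
    (hUne : ∀ i, (U i).Nonempty) (hU₀ne : U₀.Nonempty)
    (hUcpt : ∀ i, IsCompact (U i)) (hU₀cpt : IsCompact U₀)
    (hUcvx : ∀ i, Convex ℝ (U i)) (hU₀cvx : Convex ℝ U₀)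
    (hUnc : ∀ i, ∀ u ∈ U i, Nonconst u) (hU₀nc : ∀ u ∈ U₀, Nonconst u)
    (hnc : ∃ zs zi : Z, (∀ i, ∀ u ∈ U i, u zi < u zs) ∧ (∀ u ∈ U₀, u zi < u zs))
    (hps : ∀ l l' : Z → ℝ, IsLottery l → IsLottery l' →
      (∀ i, ¬ Pref (U i) l l') → ¬ Pref U₀ l l') :
    ∀ u : Fin n → (Z → ℝ), (∀ i, u i ∈ U i) →
      ∃ u₀ ∈ U₀, ∃ α : Fin n → ℝ, ∃ β : ℝ,
        (∀ i, 0 ≤ α i) ∧ α ≠ 0 ∧ u₀ = fun z => (∑ i, α i * u i z) + β :=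
  pareto_star_only_if_general U U₀ hU₀cpt hU₀cvx hU₀nc hnc hps
end

section
/- Corollary (common utility function): under the hypotheses of the main theorem, if Pareto-star holds and u is a nonconstant function such that for each individual i ∈ {1,...,n} there exists u_i ∈ U_i with u_i = a_i u + b_i·1 for some a_i > 0, b_i ∈ ℝ, then there exists u_0 ∈ U_0 with u_0 = a u + b·1 for some a > 0, b ∈ ℝ. -/
open Finset

/-!
If no element of `U₀` is a positive affine transform of `u`, then, once constants are projected
away, `u` lies outside the cone spanned by `U₀`; this cone is closed and convex because `U₀` is
compact, convex and contains no constant function. A functional separating `u` from it is a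
zero-sum direction `d` that every social utility weakly favours and `u` strictly disfavours. Two
lotteries whose difference is a positive multiple of `d` are then ranked `l ≿ l'` by society but,
since each individual has a utility affinely equivalent to `u`, by no individual, contradicting
Pareto-star.
-/

open Metric
open scoped Pointwise

section Cone

variable {E : Type*} [NormedAddCommGroup E] [NormedSpace ℝ E] {A : Set E}

theorem convex_Ici_smul (hA : Convex ℝ A) : Convex ℝ (Set.Ici (0 : ℝ) • A) := by
  rintro _ ⟨s, hs, x, hx, rfl⟩ _ ⟨t, ht, y, hy, rfl⟩ a b ha hb hab
  have hsa : 0 ≤ a * s := mul_nonneg ha hs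
  have htb : 0 ≤ b * t := mul_nonneg hb ht
  simp only [smul_smul]
  rcases (add_nonneg hsa htb).eq_or_lt with hc | hc
  · obtain ⟨has, hbt⟩ := (add_eq_zero_iff_of_nonneg hsa htb).1 hc.symm
    exact ⟨0, Set.mem_Ici.2 le_rfl, x, hx, by simp [has, hbt]⟩
  · refine ⟨a * s + b * t, hc.le, (a * s / (a * s + b * t)) • x + (b * t / (a * s + b * t)) • y,
      hA hx hy (by positivity) (by positivity) (by field_simp), ?_⟩
    simp only [smul_add, smul_smul]
    congr 2 <;> field_simp

theorem isClosed_Ici_smul (hA : IsCompact A) (h0 : (0 : E) ∉ A) :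
    IsClosed (Set.Ici (0 : ℝ) • A) := by
  rcases A.eq_empty_or_nonempty with rfl | hne
  · simp
  obtain ⟨x₀, hx₀, hmin⟩ := hA.exists_isMinOn hne continuous_norm.continuousOn
  have hδ : 0 < ‖x₀‖ := norm_pos_iff.2 (ne_of_mem_of_not_mem hx₀ h0)
  refine closure_subset_iff_isClosed.1 fun y hy => ?_
  -- near `y`, the scalars are bounded because the norms on `A` are bounded below by `‖x₀‖`
  have hball : ball y 1 ∩ Set.Ici (0 : ℝ) • A ⊆ Set.Icc (0 : ℝ) ((‖y‖ + 1) / ‖x₀‖) • A := by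
    rintro _ ⟨hz, t, ht, x, hx, rfl⟩
    refine ⟨t, ⟨ht, ?_⟩, x, hx, rfl⟩
    rw [le_div_iff₀ hδ]
    calc t * ‖x₀‖ ≤ t * ‖x‖ := mul_le_mul_of_nonneg_left (hmin hx) ht
      _ = ‖t • x‖ := by rw [norm_smul, Real.norm_of_nonneg ht]
      _ ≤ ‖y‖ + 1 := (norm_lt_of_mem_ball hz).le
  have hcpt : IsCompact (Set.Icc (0 : ℝ) ((‖y‖ + 1) / ‖x₀‖) • A) := isCompact_Icc.smul_set hA
  have hy' := closure_mono hball (isOpen_ball.inter_closure ⟨mem_ball_self one_pos, hy⟩)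
  rw [hcpt.isClosed.closure_eq] at hy'
  exact Set.smul_subset_smul_right Set.Icc_subset_Ici_self hy'

theorem exists_nonneg_on_neg_of_notMem_Ici_smul (hcpt : IsCompact A) (hcvx : Convex ℝ A)
    (hne : A.Nonempty) (h0 : (0 : E) ∉ A) {x : E} (hx : x ∉ Set.Ici (0 : ℝ) • A) :
    ∃ f : StrongDual ℝ E, (∀ a ∈ A, 0 ≤ f a) ∧ f x < 0 := by
  obtain ⟨f, s, hfK, hfx⟩ :=
    geometric_hahn_banach_closed_point (convex_Ici_smul hcvx) (isClosed_Ici_smul hcpt h0) hx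
  obtain ⟨a₀, ha₀⟩ := hne
  have hs : 0 < s := by simpa using hfK 0 ⟨0, Set.mem_Ici.2 le_rfl, a₀, ha₀, zero_smul _ _⟩
  refine ⟨-f, fun a ha => ?_, by simp only [neg_apply]; linarith⟩
  by_contra! hfa
  rw [neg_apply, neg_neg_iff_pos] at hfa
  have := hfK ((s / f a) • a) ⟨_, div_nonneg hs.le hfa.le, a, ha, rfl⟩
  rw [map_smul, smul_eq_mul, div_mul_cancel₀ _ hfa.ne'] at this
  exact this.false

end Cone

section Lotteries

variable {Z : Type*}

def subConstAt (z₀ : Z) : (Z → ℝ) →L[ℝ] (Z → ℝ) :=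
  .id ℝ _ - (ContinuousLinearMap.proj z₀).smulRight 1

@[simp]
theorem subConstAt_apply (z₀ : Z) (w : Z → ℝ) (z : Z) : subConstAt z₀ w z = w z - w z₀ := by
  simp [subConstAt]

theorem subConstAt_ne_zero {w : Z → ℝ} (hw : Nonconst w) (z₀ : Z) : subConstAt z₀ w ≠ 0 := by
  obtain ⟨z, z', hzz'⟩ := hw
  intro h
  have hz := congrFun h z
  have hz' := congrFun h z'
  simp only [subConstAt_apply, Pi.zero_apply] at hz hz'
  exact hzz' (by linarith)

theorem eq_affine_of_subConstAt_eq_smul {z₀ : Z} {u w : Z → ℝ} {t : ℝ} (ht : t ≠ 0)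
    (h : subConstAt z₀ u = t • subConstAt z₀ w) :
    w = fun z => t⁻¹ * u z + (w z₀ - t⁻¹ * u z₀) := by
  ext z
  have hz := congrFun h z
  simp only [Pi.smul_apply, smul_eq_mul, subConstAt_apply] at hz
  field_simp
  linarith

variable [Fintype Z]

theorem EU_eq_dotProduct (l u : Z → ℝ) : EU l u = l ⬝ᵥ u := rfl

theorem dotProduct_affine_eq_mul {d : Z → ℝ} (hd : d ⬝ᵥ 1 = 0) (u : Z → ℝ) (a b : ℝ) :
    (d ⬝ᵥ fun z => a * u z + b) = a * d ⬝ᵥ u := by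
  have : (fun z => a * u z + b) = a • u + b • 1 := by ext; simp
  rw [this, dotProduct_add, dotProduct_smul, dotProduct_smul, hd, smul_eq_mul, smul_eq_mul,
    mul_zero, add_zero]

theorem isLottery_inv_sum_smul {p : Z → ℝ} (hp : 0 ≤ p) (hs : 0 < ∑ z, p z) :
    IsLottery ((∑ z, p z)⁻¹ • p) := by
  refine ⟨fun z => mul_nonneg (inv_nonneg.2 hs.le) (hp z), ?_⟩
  simp only [Pi.smul_apply, smul_eq_mul, ← Finset.mul_sum, inv_mul_cancel₀ hs.ne']

theorem exists_isLottery_sub_eq_smul {d : Z → ℝ} (hd : d ⬝ᵥ 1 = 0) (hd0 : d ≠ 0) :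
    ∃ l l' : Z → ℝ, IsLottery l ∧ IsLottery l' ∧ ∃ c : ℝ, 0 < c ∧ l - l' = c • d := by
  have hsum : ∑ z, d⁺ z = ∑ z, d⁻ z := by
    rw [← sub_eq_zero, ← Finset.sum_sub_distrib, ← hd, dotProduct_one]
    simp [posPart_sub_negPart]
  have hs : 0 < ∑ z, d⁺ z := by
    refine (Fintype.sum_nonneg (posPart_nonneg d)).lt_of_ne fun hs0 => hd0 ?_
    rw [← posPart_sub_negPart d,
      (Fintype.sum_eq_zero_iff_of_nonneg (posPart_nonneg d)).1 hs0.symm,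
      (Fintype.sum_eq_zero_iff_of_nonneg (negPart_nonneg d)).1 (hsum ▸ hs0.symm), sub_zero]
  refine ⟨_, _, isLottery_inv_sum_smul (posPart_nonneg d) hs,
    isLottery_inv_sum_smul (negPart_nonneg d) (hsum ▸ hs), _, inv_pos.2 hs, ?_⟩
  rw [← hsum, ← smul_sub, posPart_sub_negPart]

theorem pref_iff_of_sub_eq_smul {l l' d : Z → ℝ} {c : ℝ} (hc : 0 < c) (h : l - l' = c • d)
    (U : Set (Z → ℝ)) : Pref U l l' ↔ ∀ w ∈ U, 0 ≤ d ⬝ᵥ w := by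
  refine forall₂_congr fun w _ => ?_
  rw [EU_eq_dotProduct, EU_eq_dotProduct, ← sub_nonneg, ← sub_dotProduct, h, smul_dotProduct,
    smul_eq_mul, mul_nonneg_iff_of_pos_left hc]

theorem exists_zero_sum_separating_of_forall_ne_affine {U₀ : Set (Z → ℝ)} (hne : U₀.Nonempty)
    (hcpt : IsCompact U₀) (hcvx : Convex ℝ U₀) (hnc : ∀ w ∈ U₀, Nonconst w) {u : Z → ℝ}
    (hu : Nonconst u) (hno : ∀ w ∈ U₀, ∀ a b : ℝ, 0 < a → w ≠ fun z => a * u z + b) :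
    ∃ d : Z → ℝ, d ⬝ᵥ 1 = 0 ∧ (∀ w ∈ U₀, 0 ≤ d ⬝ᵥ w) ∧ d ⬝ᵥ u < 0 := by
  classical
  obtain ⟨z₀, -⟩ := id hu
  set π := subConstAt z₀
  have hu' : π u ∉ Set.Ici (0 : ℝ) • π '' U₀ := by
    rintro ⟨t, ht, _, ⟨w, hw, rfl⟩, htw⟩
    have ht0 : t ≠ 0 := by
      rintro rfl
      exact subConstAt_ne_zero hu z₀ (by simpa using htw.symm)
    exact hno w hw _ _ (inv_pos.2 (ht.lt_of_ne' ht0)) (eq_affine_of_subConstAt_eq_smul ht0 htw.symm)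
  obtain ⟨f, hfA, hfu⟩ := exists_nonneg_on_neg_of_notMem_Ici_smul (hcpt.image π.continuous)
    (hcvx.linear_image π.toLinearMap) (hne.image π)
    (fun ⟨w, hw, h⟩ => subConstAt_ne_zero (hnc w hw) z₀ h) hu'
  set d := (dotProductEquiv ℝ Z).symm (f.comp π).toLinearMap
  have hd (w : Z → ℝ) : d ⬝ᵥ w = f (π w) :=
    LinearMap.congr_fun ((dotProductEquiv ℝ Z).apply_symm_apply _) w
  refine ⟨d, ?_, fun w hw => (hd w).symm ▸ hfA _ ⟨w, hw, rfl⟩, (hd u).symm ▸ hfu⟩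
  rw [hd]
  convert f.map_zero
  ext z
  simp [π]

end Lotteries

theorem corollary_common_utility_general
    {Z : Type*} [Fintype Z] {n : ℕ}
    (U : Fin n → Set (Z → ℝ)) (U₀ : Set (Z → ℝ))
    (hU₀ne : U₀.Nonempty)
    (hU₀cpt : IsCompact U₀)
    (hU₀cvx : Convex ℝ U₀)
    (hU₀nc : ∀ u ∈ U₀, Nonconst u)
    (hps : ∀ l l' : Z → ℝ, IsLottery l → IsLottery l' →
      (∀ i, ¬ Pref (U i) l l') → ¬ Pref U₀ l l')
    (u : Z → ℝ) (hu : Nonconst u)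
    (hcommon : ∀ i, ∃ v ∈ U i, ∃ a : ℝ, ∃ b : ℝ, 0 < a ∧ v = fun z => a * u z + b) :
    ∃ u₀ ∈ U₀, ∃ a : ℝ, ∃ b : ℝ, 0 < a ∧ u₀ = fun z => a * u z + b := by
  by_contra! hno
  obtain ⟨d, hd1, hdU₀, hdu⟩ :=
    exists_zero_sum_separating_of_forall_ne_affine hU₀ne hU₀cpt hU₀cvx hU₀nc hu hno
  have hd0 : d ≠ 0 := by
    rintro rfl
    simp at hdu
  obtain ⟨l, l', hl, hl', c, hc, hll'⟩ := exists_isLottery_sub_eq_smul hd1 hd0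
  refine hps l l' hl hl' (fun i hi => ?_) ((pref_iff_of_sub_eq_smul hc hll' U₀).2 hdU₀)
  obtain ⟨v, hv, a, b, ha, rfl⟩ := hcommon i
  have hdv := (pref_iff_of_sub_eq_smul hc hll' (U i)).1 hi _ hv
  rw [dotProduct_affine_eq_mul hd1] at hdv
  exact (mul_neg_of_pos_of_neg ha hdu).not_ge hdv

theorem corollary_common_utility
    {Z : Type*} [Fintype Z] [Nonempty Z] {n : ℕ} (hn : 0 < n)
    (U : Fin n → Set (Z → ℝ)) (U₀ : Set (Z → ℝ))
    (hUne : ∀ i, (U i).Nonempty) (hU₀ne : U₀.Nonempty)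
    (hUcpt : ∀ i, IsCompact (U i)) (hU₀cpt : IsCompact U₀)
    (hUcvx : ∀ i, Convex ℝ (U i)) (hU₀cvx : Convex ℝ U₀)
    (hUnc : ∀ i, ∀ u ∈ U i, Nonconst u) (hU₀nc : ∀ u ∈ U₀, Nonconst u)
    (hnc : ∃ zs zi : Z, (∀ i, ∀ u ∈ U i, u zi < u zs) ∧ (∀ u ∈ U₀, u zi < u zs))
    (hps : ∀ l l' : Z → ℝ, IsLottery l → IsLottery l' →
      (∀ i, ¬ Pref (U i) l l') → ¬ Pref U₀ l l')
    (u : Z → ℝ) (hu : Nonconst u)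
    (hcommon : ∀ i, ∃ v ∈ U i, ∃ a : ℝ, ∃ b : ℝ, 0 < a ∧ v = fun z => a * u z + b) :
    ∃ u₀ ∈ U₀, ∃ a : ℝ, ∃ b : ℝ, 0 < a ∧ u₀ = fun z => a * u z + b :=
  corollary_common_utility_general U U₀ hU₀ne hU₀cpt hU₀cvx hU₀nc hps u hu hcommon
end

section
/- Equivalence of representing sets under strict-increase augmentation: let ≿ be represented by a set U of functions Z → ℝ (l ≿ l' iff E_l[u] ≥ E_{l'}[u] for all u ∈ U), and suppose u* : Z → ℝ satisfies: l ≻ l' implies E_l[u*] > E_{l'}[u*], and l ∼ l' implies E_l[u*] = E_{l'}[u*]. Define U* = { u + ε u* : ε > 0, u ∈ U }. Then U* represents the same relation: for all lotteries l, l', (E_l[v] ≥ E_{l'}[v] for all v ∈ U*) iff (E_l[u] ≥ E_{l'}[u] for all u ∈ U). -/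
open Finset

lemma EU_add_smul {Z : Type*} [Fintype Z] (l u ustar : Z → ℝ) (ε : ℝ) :
    EU l (fun z => u z + ε * ustar z) = EU l u + ε * EU l ustar := by
  simp only [EU, mul_add, Finset.sum_add_distrib, Finset.mul_sum]
  congr 1
  exact Finset.sum_congr rfl fun z _ => by ring

theorem strict_increase_augmentation
    {Z : Type*} [Fintype Z] (U : Set (Z → ℝ)) (ustar : Z → ℝ)
    (hstrict : ∀ l l' : Z → ℝ, IsLottery l → IsLottery l' →
      Pref U l l' → ¬ Pref U l' l → EU l' ustar < EU l ustar)
    (hindiff : ∀ l l' : Z → ℝ, IsLottery l → IsLottery l' →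
      Pref U l l' → Pref U l' l → EU l ustar = EU l' ustar)
    (Ustar : Set (Z → ℝ))
    (hUstar : Ustar = {w | ∃ ε : ℝ, ∃ u ∈ U, 0 < ε ∧ w = fun z => u z + ε * ustar z}) :
    ∀ l l' : Z → ℝ, IsLottery l → IsLottery l' →
      (Pref Ustar l l' ↔ Pref U l l') := by
  intro l l' hl hl'
  constructor
  · intro h u hu
    by_contra hlt
    push_neg at hlt
    have key : ∀ ε : ℝ, 0 < ε →
        EU l' u + ε * EU l' ustar ≤ EU l u + ε * EU l ustar := by
      intro ε hε
      have := h (fun z => u z + ε * ustar z)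
        (by rw [hUstar]; exact ⟨ε, u, hu, hε, rfl⟩)
      simpa [EU_add_smul] using this
    set c := EU l ustar - EU l' ustar with hc
    set δ := EU l' u - EU l u with hδ
    have hδpos : 0 < δ := by simp [hδ]; linarith
    rcases le_or_gt c 0 with hc0 | hc0
    · have := key 1 one_pos
      nlinarith
    · have := key (δ / (2 * c)) (by positivity)
      have h2 : δ / (2 * c) * c = δ / 2 := by field_simp
      nlinarith
  · intro h v hv
    rw [hUstar] at hv
    obtain ⟨ε, u, hu, hε, rfl⟩ := hv
    have h1 : EU l' u ≤ EU l u := h u hu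
    have h2 : EU l' ustar ≤ EU l ustar := by
      by_cases hrev : Pref U l' l
      · exact (hindiff l l' hl hl' h hrev).ge
      · exact (hstrict l l' hl hl' h hrev).le
    rw [EU_add_smul, EU_add_smul]
    nlinarith
end

section
/- Proposition 1 (if direction): suppose each U_i (i ∈ {0,1,...,n}) is a strictly increasing representing set for ≿_i, and there exist u_0 ∈ U_0, (u_1,...,u_n) ∈ Π_i U_i, a nonzero α ∈ ℝ^n_{≥0}, and β ∈ ℝ with u_0 = Σ_i α_i u_i + β·1. Then Non-Reversal holds: for all lotteries l, l', if l ≻_i l' for all i ∈ {1,...,n}, then l' ⋡_0 l. -/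
open Finset

lemma EU_affine {Z : Type*} [Fintype Z] {n : ℕ} (l : Z → ℝ) (hl : IsLottery l)
    (u : Fin n → (Z → ℝ)) (α : Fin n → ℝ) (β : ℝ) :
    EU l (fun z => (∑ i, α i * u i z) + β) = (∑ i, α i * EU l (u i)) + β := by
  unfold EU
  simp only [mul_add, Finset.sum_add_distrib, ← Finset.sum_mul, hl.2, one_mul,
    Finset.mul_sum]
  congr 1
  rw [Finset.sum_comm]
  congr 1; ext i; congr 1; ext z; ring

theorem non_reversal_if
    {Z : Type*} [Fintype Z] {n : ℕ}
    (U : Fin n → Set (Z → ℝ)) (U₀ : Set (Z → ℝ))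
    (hUinc : ∀ i, ∀ u ∈ U i, ∀ l l' : Z → ℝ, IsLottery l → IsLottery l' →
      Pref (U i) l l' → ¬ Pref (U i) l' l → EU l' u < EU l u)
    (hU₀inc : ∀ u ∈ U₀, ∀ l l' : Z → ℝ, IsLottery l → IsLottery l' →
      Pref U₀ l l' → ¬ Pref U₀ l' l → EU l' u < EU l u)
    (hrep : ∃ u₀ ∈ U₀, ∃ u : Fin n → (Z → ℝ), (∀ i, u i ∈ U i) ∧
      ∃ α : Fin n → ℝ, ∃ β : ℝ, (∀ i, 0 ≤ α i) ∧ α ≠ 0 ∧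
        u₀ = fun z => (∑ i, α i * u i z) + β) :
    ∀ l l' : Z → ℝ, IsLottery l → IsLottery l' →
      (∀ i, Pref (U i) l l' ∧ ¬ Pref (U i) l' l) → ¬ Pref U₀ l' l := by
  intro l l' hl hl' hstrict hpref
  obtain ⟨u₀, hu₀, u, hu, α, β, hα, hαne, hrepr⟩ := hrep
  have hstr : ∀ i, EU l' (u i) < EU l (u i) := fun i =>
    hUinc i (u i) (hu i) l l' hl hl' (hstrict i).1 (hstrict i).2
  obtain ⟨j, hj⟩ := Function.ne_iff.mp hαne
  have hjpos : 0 < α j := lt_of_le_of_ne (hα j) (Ne.symm hj)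
  have hsum : (∑ i, α i * EU l' (u i)) < ∑ i, α i * EU l (u i) := by
    apply Finset.sum_lt_sum
    · intro i _
      exact mul_le_mul_of_nonneg_left (hstr i).le (hα i)
    · exact ⟨j, Finset.mem_univ j, by
        exact mul_lt_mul_of_pos_left (hstr j) hjpos⟩
  have h1 : EU l u₀ ≤ EU l' u₀ := hpref u₀ hu₀
  rw [hrepr, EU_affine l hl u α β, EU_affine l' hl' u α β] at h1
  linarith
end

section
/- Proposition 1 (only-if direction): suppose each agent i ∈ {0,...,n} has an expected multi-utility preference with a strictly increasing nonempty compact convex set U_i of nonconstant functions, and (U_1,...,U_n) has a no-conflict pair respected by all sets. If Non-Reversal holds (for all lotteries l, l': l ≻_i l' for all i ∈ {1,...,n} implies l' ⋡_0 l), then there exist u_0 ∈ U_0, (u_1,...,u_n) ∈ Π_{i=1}^n U_i, a nonzero α ∈ ℝ^n_{≥0}, and β ∈ ℝ with u_0 = Σ_i α_i u_i + β·1. -/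
open Finset

/-!
Let `C` be the set of functions `∑ i, α i * w i + β` with `α i ≥ 0` and `w i ∈ U i`. The gap
`u ↦ u zs - u zi` of the no-conflict pair is a linear functional that vanishes on constants and is
bounded below by a positive constant on every `U i`, so it bounds the coefficients `α i`; hence the
convex cone `C` is closed. If `U₀` meets `C`, a common point is the required representation, with
`α ≠ 0` because that point is nonconstant. Otherwise strict separation of the compact set `U₀` from `C`,
perturbed by a small multiple of the gap, gives a linear functional `F` vanishing on constants
with `F > 0` on every `U i` and `F < 0` on `U₀`. Such an `F` is a positive multiple of
`u ↦ EU l u - EU l' u` for two lotteries `l, l'`; then `l ≻ᵢ l'` for every `i` while `l' ≿₀ l`,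
contradicting Non-Reversal.
-/

open Filter Topology Pointwise

theorem Convex.exists_smul_add_smul_eq {𝕜 E : Type*} [Field 𝕜] [LinearOrder 𝕜]
    [IsStrictOrderedRing 𝕜] [AddCommGroup E] [Module 𝕜 E] {s : Set E} (hs : Convex 𝕜 s)
    {a b : 𝕜} (ha : 0 ≤ a) (hb : 0 ≤ b) {x y : E} (hx : x ∈ s) (hy : y ∈ s) :
    ∃ w ∈ s, a • x + b • y = (a + b) • w := by
  obtain ⟨w, hw, h⟩ : a • x + b • y ∈ (a + b) • s := by
    rw [hs.add_smul ha hb]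
    exact Set.add_mem_add (Set.smul_mem_smul_set hx) (Set.smul_mem_smul_set hy)
  exact ⟨w, hw, h.symm⟩

theorem IsCompact.exists_pos_mul_lt {X : Type*} [TopologicalSpace X] {K : Set X}
    (hK : IsCompact K) {g : X → ℝ} (hg : ContinuousOn g K) {δ : ℝ} (hδ : 0 < δ) :
    ∃ ε > 0, ∀ x ∈ K, ε * g x < δ := by
  obtain ⟨M, hM⟩ := hK.bddAbove_image hg
  refine ⟨δ / (|M| + 1), by positivity, fun x hx => ?_⟩
  calc δ / (|M| + 1) * g x ≤ δ / (|M| + 1) * |M| :=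
        mul_le_mul_of_nonneg_left ((hM ⟨x, hx, rfl⟩).trans (le_abs_self M)) (by positivity)
    _ < δ / (|M| + 1) * (|M| + 1) := by gcongr; linarith
    _ = δ := div_mul_cancel₀ _ (by positivity)

theorem exists_nonneg_neg_of_disjoint_cone {E : Type*} [TopologicalSpace E] [AddCommGroup E]
    [Module ℝ E] [IsTopologicalAddGroup E] [ContinuousSMul ℝ E] [LocallyConvexSpace ℝ E]
    {K C : Set E} (hKcvx : Convex ℝ K) (hK : IsCompact K) (hCcvx : Convex ℝ C) (hC : IsClosed C)
    (h0 : (0 : E) ∈ C) (hsmul : ∀ v ∈ C, ∀ t : ℝ, 0 ≤ t → t • v ∈ C) (hd : Disjoint K C) :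
    ∃ f : StrongDual ℝ E, (∀ v ∈ C, 0 ≤ f v) ∧ ∃ p < 0, ∀ u ∈ K, f u < p := by
  obtain ⟨f, p, q, hfK, hpq, hfC⟩ := geometric_hahn_banach_compact_closed hKcvx hK hCcvx hC hd
  have hq : q < 0 := by simpa using hfC 0 h0
  refine ⟨f, fun v hv => ?_, p, hpq.trans hq, hfK⟩
  by_contra! hneg
  -- the ray through `v` reaches the level `q`
  have := hfC _ (hsmul v hv (q / f v) (div_nonneg_of_nonpos hq.le hneg.le))
  rw [map_smul, smul_eq_mul, div_mul_cancel₀ _ hneg.ne] at this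
  exact lt_irrefl _ this

section AffineCone

variable {Z ι : Type*} [Fintype ι]

def affineComb (α : ι → ℝ) (w : ι → Z → ℝ) (β : ℝ) : Z → ℝ := fun z => ∑ i, α i * w i z + β

def affineCone (U : ι → Set (Z → ℝ)) : Set (Z → ℝ) :=
  {v | ∃ α w β, (∀ i, 0 ≤ α i) ∧ (∀ i, w i ∈ U i) ∧ v = affineComb α w β}

theorem continuous_affineComb :
    Continuous fun s : ((ι → ℝ) × (ι → Z → ℝ)) × ℝ => affineComb s.1.1 s.1.2 s.2 := by
  unfold affineComb; fun_prop

theorem affineComb_sub_affineComb (α : ι → ℝ) (w : ι → Z → ℝ) (β : ℝ) (z z' : Z) :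
    affineComb α w β z - affineComb α w β z' = ∑ i, α i * (w i z - w i z') := by
  simp [affineComb, mul_sub, sum_sub_distrib]

theorem mul_sub_le_affineComb_sub {α : ι → ℝ} {w : ι → Z → ℝ} (β : ℝ) {z z' : Z}
    (hα : ∀ i, 0 ≤ α i) (hw : ∀ i, w i z' ≤ w i z) (i : ι) :
    α i * (w i z - w i z') ≤ affineComb α w β z - affineComb α w β z' := by
  rw [affineComb_sub_affineComb]
  exact single_le_sum (fun j _ => mul_nonneg (hα j) (sub_nonneg.2 (hw j))) (mem_univ i)

variable {U : ι → Set (Z → ℝ)}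

theorem smul_mem_affineCone {v : Z → ℝ} (hv : v ∈ affineCone U) {t : ℝ} (ht : 0 ≤ t) :
    t • v ∈ affineCone U := by
  obtain ⟨α, w, β, hα, hw, rfl⟩ := hv
  refine ⟨t • α, w, t * β, fun i => mul_nonneg ht (hα i), hw, ?_⟩
  funext z
  simp [affineComb, mul_add, mul_sum, mul_assoc]

theorem const_mem_affineCone (hU : ∀ i, (U i).Nonempty) (t : ℝ) : (fun _ => t) ∈ affineCone U :=
  ⟨0, fun i => (hU i).some, t, fun _ => le_rfl, fun i => (hU i).some_mem, by
    funext z; simp [affineComb]⟩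

theorem mem_affineCone_of_mem (hU : ∀ i, (U i).Nonempty) {i : ι} {u : Z → ℝ} (hu : u ∈ U i) :
    u ∈ affineCone U := by
  classical
  refine ⟨Pi.single i 1, Function.update (fun j => (hU j).some) i u, 0, fun j => ?_,
    fun j => ?_, ?_⟩
  · by_cases h : j = i <;> simp [h]
  · by_cases h : j = i
    · subst h; simpa
    · simpa [h] using (hU j).some_mem
  · funext z; simp [affineComb, Pi.single_apply]

theorem convex_affineCone (hU : ∀ i, Convex ℝ (U i)) : Convex ℝ (affineCone U) := by
  rintro _ ⟨α, w, β, hα, hw, rfl⟩ _ ⟨α', w', β', hα', hw', rfl⟩ s t hs ht -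
  choose w'' hw'' hcomb using fun i =>
    (hU i).exists_smul_add_smul_eq (mul_nonneg hs (hα i)) (mul_nonneg ht (hα' i)) (hw i) (hw' i)
  refine ⟨fun i => s * α i + t * α' i, w'', s * β + t * β',
    fun i => add_nonneg (mul_nonneg hs (hα i)) (mul_nonneg ht (hα' i)), hw'', ?_⟩
  funext z
  have h := fun i => congrFun (hcomb i) z
  simp only [Pi.add_apply, Pi.smul_apply, smul_eq_mul] at h
  simp only [affineComb, Pi.add_apply, Pi.smul_apply, smul_eq_mul, ← h, sum_add_distrib, mul_add,
    mul_sum, mul_assoc]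
  ring

theorem isClosed_affineCone [Countable Z] (hU : ∀ i, IsCompact (U i)) {zs zi : Z}
    (hgap : ∀ i, ∀ u ∈ U i, u zi < u zs) : IsClosed (affineCone U) := by
  refine IsSeqClosed.isClosed fun v p hv hvp => ?_
  choose α w β hα hw hv using hv
  have hg : Continuous fun u : Z → ℝ => u zs - u zi := by fun_prop
  choose m hm0 hm using fun i =>
    (hU i).exists_forall_le' hg.continuousOn fun u hu => sub_pos.2 (hgap i u hu)
  obtain ⟨G, hG⟩ := ((hg.tendsto p).comp hvp).bddAbove_range
  have hbound : ∀ j i, α j i ≤ G / m i := fun j i => by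
    rw [le_div_iff₀ (hm0 i)]
    calc α j i * m i ≤ α j i * (w j i zs - w j i zi) :=
          mul_le_mul_of_nonneg_left (hm i _ (hw j i)) (hα j i)
      _ ≤ v j zs - v j zi :=
          hv j ▸ mul_sub_le_affineComb_sub _ (hα j) (fun i => (hgap i _ (hw j i)).le) i
      _ ≤ G := hG ⟨j, rfl⟩
  obtain ⟨⟨a, x⟩, ⟨ha, hx⟩, φ, hφ, hlim⟩ :=
    ((isCompact_univ_pi fun i => isCompact_Icc).prod (isCompact_univ_pi hU)).tendsto_subseq
      (x := fun j => (α j, w j)) fun j => ⟨fun i _ => ⟨hα j i, hbound j i⟩, fun i _ => hw j i⟩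
  have hvφ := hvp.comp hφ.tendsto_atTop
  have hβ : β ∘ φ = fun j => v (φ j) zi - affineComb (α (φ j)) (w (φ j)) 0 zi := by
    funext j; simp [hv (φ j), affineComb]
  have hβlim : Tendsto (β ∘ φ) atTop (𝓝 (p zi - affineComb a x 0 zi)) := by
    have hc : Continuous fun s : (ι → ℝ) × (ι → Z → ℝ) => affineComb s.1 s.2 0 zi := by
      unfold affineComb; fun_prop
    rw [hβ]
    exact (((continuous_apply zi).tendsto p).comp hvφ).sub ((hc.tendsto (a, x)).comp hlim)
  refine ⟨a, x, p zi - affineComb a x 0 zi, fun i => (ha i trivial).1, fun i => hx i trivial,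
    tendsto_nhds_unique hvφ ?_⟩
  convert (continuous_affineComb.tendsto _).comp (hlim.prodMk_nhds hβlim) using 1
  funext j
  exact hv (φ j)

end AffineCone

theorem exists_isLottery_smul_sub {Z : Type*} [Fintype Z] {c : Z → ℝ} (hc : ∑ z, c z = 0)
    (hc0 : c ≠ 0) : ∃ l l', IsLottery l ∧ IsLottery l' ∧ ∃ m : ℝ, 0 < m ∧ c = m • (l - l') := by
  have hsum : ∑ z, c⁺ z = ∑ z, c⁻ z := by
    rw [← sub_eq_zero, ← sum_sub_distrib, ← hc]
    simp only [Pi.posPart_apply, Pi.negPart_apply, posPart_sub_negPart]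
  have hm : 0 < ∑ z, c⁺ z := by
    refine (sum_nonneg fun z _ => posPart_nonneg (c z)).lt_of_ne' fun hm0 => hc0 ?_
    have hpos := (sum_eq_zero_iff_of_nonneg fun z _ => posPart_nonneg (c z)).1 hm0
    have hneg := (sum_eq_zero_iff_of_nonneg fun z _ => negPart_nonneg (c z)).1 (hsum ▸ hm0)
    ext z
    rw [Pi.zero_apply, ← posPart_sub_negPart (c z), hpos z (mem_univ z), hneg z (mem_univ z),
      sub_zero]
  set m := ∑ z, c⁺ z
  refine ⟨m⁻¹ • c⁺, m⁻¹ • c⁻, ⟨fun z => ?_, ?_⟩, ⟨fun z => ?_, ?_⟩, m, hm, ?_⟩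
  · exact mul_nonneg (inv_nonneg.2 hm.le) (posPart_nonneg (c z))
  · simp only [Pi.smul_apply, smul_eq_mul, ← mul_sum]
    exact inv_mul_cancel₀ hm.ne'
  · exact mul_nonneg (inv_nonneg.2 hm.le) (negPart_nonneg (c z))
  · simp only [Pi.smul_apply, smul_eq_mul, ← mul_sum, ← hsum]
    exact inv_mul_cancel₀ hm.ne'
  · rw [← smul_sub, smul_inv_smul₀ hm.ne', posPart_sub_negPart]

theorem exists_isLottery_of_map_one_eq_zero {Z : Type*} [Fintype Z] (F : (Z → ℝ) →L[ℝ] ℝ)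
    (hF1 : F 1 = 0) (hF : F ≠ 0) :
    ∃ l l', IsLottery l ∧ IsLottery l' ∧ ∃ m : ℝ, 0 < m ∧ ∀ u, F u = m * (EU l u - EU l' u) := by
  classical
  set c : Z → ℝ := fun z => F fun j => if z = j then 1 else 0
  have hFc : ∀ u, F u = c ⬝ᵥ u := fun u => by
    rw [← F.coe_coe, LinearMap.pi_apply_eq_sum_univ]
    simp [dotProduct, c, mul_comm]
  obtain ⟨l, l', hl, hl', m, hm, hc⟩ := exists_isLottery_smul_sub (c := c)
    (by rw [← dotProduct_one, ← hFc, hF1]) (fun hc => hF (by ext u; simp [hFc, hc]))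
  exact ⟨l, l', hl, hl', m, hm, fun u => by rw [hFc, hc, smul_dotProduct, sub_dotProduct]; rfl⟩

theorem exists_strict_separation_of_disjoint_affineCone {Z ι : Type*} [Fintype Z] [Fintype ι]
    {U : ι → Set (Z → ℝ)} {U₀ : Set (Z → ℝ)} (hUne : ∀ i, (U i).Nonempty)
    (hU : ∀ i, IsCompact (U i)) (hU₀ : IsCompact U₀) (hUcvx : ∀ i, Convex ℝ (U i))
    (hU₀cvx : Convex ℝ U₀) {zs zi : Z} (hgap : ∀ i, ∀ u ∈ U i, u zi < u zs)
    (hd : Disjoint U₀ (affineCone U)) :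
    ∃ F : (Z → ℝ) →L[ℝ] ℝ, F 1 = 0 ∧ (∀ i, ∀ u ∈ U i, 0 < F u) ∧ ∀ u ∈ U₀, F u < 0 := by
  obtain ⟨f, hfC, p, hp, hfU₀⟩ := exists_nonneg_neg_of_disjoint_cone hU₀cvx hU₀
    (convex_affineCone hUcvx) (isClosed_affineCone hU hgap) (const_mem_affineCone hUne 0)
    (fun v hv t ht => smul_mem_affineCone hv ht) hd
  have hf1 : f 1 = 0 := by
    have hneg : 0 ≤ f (-1) := hfC _ (const_mem_affineCone hUne (-1))
    rw [map_neg] at hneg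
    exact le_antisymm (neg_nonneg.1 hneg) (hfC _ (const_mem_affineCone hUne 1))
  set g : (Z → ℝ) →L[ℝ] ℝ := .proj zs - .proj zi
  obtain ⟨ε, hε, hεU₀⟩ := hU₀.exists_pos_mul_lt g.continuous.continuousOn (neg_pos.2 hp)
  refine ⟨f + ε • g, by simp [hf1, g], fun i u hu => ?_, fun u hu => ?_⟩
  · have hfu := hfC u (mem_affineCone_of_mem hUne hu)
    have hgu : 0 < g u := sub_pos.2 (hgap i u hu)
    simpa using add_pos_of_nonneg_of_pos hfu (mul_pos hε hgu)
  · have hεg := hεU₀ u hu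
    have hfu := hfU₀ u hu
    simp only [add_apply, smul_apply, smul_eq_mul]
    linarith

theorem non_reversal_only_if_general
    {Z : Type*} [Fintype Z] {n : ℕ}
    (U : Fin n → Set (Z → ℝ)) (U₀ : Set (Z → ℝ))
    (hUne : ∀ i, (U i).Nonempty) (hU₀ne : U₀.Nonempty)
    (hUcpt : ∀ i, IsCompact (U i)) (hU₀cpt : IsCompact U₀)
    (hUcvx : ∀ i, Convex ℝ (U i)) (hU₀cvx : Convex ℝ U₀)
    (hU₀nc : ∀ u ∈ U₀, Nonconst u)
    (hnc : ∃ zs zi : Z, (∀ i, ∀ u ∈ U i, u zi < u zs) ∧ (∀ u ∈ U₀, u zi < u zs))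
    (hnr : ∀ l l' : Z → ℝ, IsLottery l → IsLottery l' →
      (∀ i, Pref (U i) l l' ∧ ¬ Pref (U i) l' l) → ¬ Pref U₀ l' l) :
    ∃ u₀ ∈ U₀, ∃ u : Fin n → (Z → ℝ), (∀ i, u i ∈ U i) ∧
      ∃ α : Fin n → ℝ, ∃ β : ℝ, (∀ i, 0 ≤ α i) ∧ α ≠ 0 ∧
        u₀ = fun z => (∑ i, α i * u i z) + β := by
  obtain ⟨zs, zi, hgap, -⟩ := hnc
  by_cases hd : Disjoint U₀ (affineCone U)
  · exfalso
    obtain ⟨F, hF1, hFU, hFU₀⟩ := exists_strict_separation_of_disjoint_affineCone hUne hUcpt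
      hU₀cpt hUcvx hU₀cvx hgap hd
    obtain ⟨u₀, hu₀⟩ := hU₀ne
    obtain ⟨l, l', hl, hl', m, hm, hF⟩ :=
      exists_isLottery_of_map_one_eq_zero F hF1 fun h => (hFU₀ u₀ hu₀).ne (by simp [h])
    have hlt : ∀ u, 0 < F u → EU l' u < EU l u := fun u hu => by
      rw [hF, mul_pos_iff_of_pos_left hm, sub_pos] at hu; exact hu
    refine hnr l l' hl hl' (fun i => ⟨fun u hu => (hlt u (hFU i u hu)).le, fun h => ?_⟩)
      fun u hu => ?_
    · obtain ⟨u, hu⟩ := hUne i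
      exact (h u hu).not_gt (hlt u (hFU i u hu))
    · have hFu := hFU₀ u hu
      rw [hF] at hFu
      exact (sub_neg.1 (neg_of_mul_neg_right hFu hm.le)).le
  · obtain ⟨u₀, hu₀, α, w, β, hα, hw, rfl⟩ := Set.not_disjoint_iff.1 hd
    refine ⟨_, hu₀, w, hw, α, β, hα, fun hα0 => ?_, rfl⟩
    obtain ⟨z, z', hne⟩ := hU₀nc _ hu₀
    simp [affineComb, hα0] at hne

theorem non_reversal_only_if
    {Z : Type*} [Fintype Z] [Nonempty Z] {n : ℕ} (hn : 0 < n)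
    (U : Fin n → Set (Z → ℝ)) (U₀ : Set (Z → ℝ))
    (hUne : ∀ i, (U i).Nonempty) (hU₀ne : U₀.Nonempty)
    (hUcpt : ∀ i, IsCompact (U i)) (hU₀cpt : IsCompact U₀)
    (hUcvx : ∀ i, Convex ℝ (U i)) (hU₀cvx : Convex ℝ U₀)
    (hUnc : ∀ i, ∀ u ∈ U i, Nonconst u) (hU₀nc : ∀ u ∈ U₀, Nonconst u)
    (hUinc : ∀ i, ∀ u ∈ U i, ∀ l l' : Z → ℝ, IsLottery l → IsLottery l' →
      Pref (U i) l l' → ¬ Pref (U i) l' l → EU l' u < EU l u)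
    (hU₀inc : ∀ u ∈ U₀, ∀ l l' : Z → ℝ, IsLottery l → IsLottery l' →
      Pref U₀ l l' → ¬ Pref U₀ l' l → EU l' u < EU l u)
    (hnc : ∃ zs zi : Z, (∀ i, ∀ u ∈ U i, u zi < u zs) ∧ (∀ u ∈ U₀, u zi < u zs))
    (hnr : ∀ l l' : Z → ℝ, IsLottery l → IsLottery l' →
      (∀ i, Pref (U i) l l' ∧ ¬ Pref (U i) l' l) → ¬ Pref U₀ l' l) :
    ∃ u₀ ∈ U₀, ∃ u : Fin n → (Z → ℝ), (∀ i, u i ∈ U i) ∧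
      ∃ α : Fin n → ℝ, ∃ β : ℝ, (∀ i, 0 ≤ α i) ∧ α ≠ 0 ∧
        u₀ = fun z => (∑ i, α i * u i z) + β :=
  non_reversal_only_if_general U U₀ hUne hU₀ne hUcpt hU₀cpt hUcvx hU₀cvx hU₀nc hnc hnr
end

section
/- Statement 2 of Corollary 2 (common set): under the hypotheses of the main theorem, assume additionally the Pareto conclusion of Danan et al. (every u_0 ∈ U_0 equals Σ_i α_i u_i + β·1 for some (u_1,...,u_n) ∈ Π_i U_i, nonzero α ∈ ℝ^n_{≥0}, β ∈ ℝ) and the Pareto-star conclusion (for every (u_1,...,u_n) ∈ Π_i U_i there is u_0 ∈ U_0 equal to such a weighted sum). If, for one fixed nonconstant u, each U_i = {a_i u + b_i·1} with a_i > 0 and b_i ∈ ℝ is a singleton positive affine copy of {u} (i ∈ {1,...,n}), then U_0 consists exactly of positive affine transformations of u, i.e., U_0 ≈ {u}. -/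
open Finset

theorem corollary_common_set_singleton
    {Z : Type*} [Fintype Z] [Nonempty Z] {n : ℕ} (hn : 0 < n)
    (U : Fin n → Set (Z → ℝ)) (U₀ : Set (Z → ℝ))
    (hUne : ∀ i, (U i).Nonempty) (hU₀ne : U₀.Nonempty)
    (u : Z → ℝ) (hu : Nonconst u)
    (hsingleton : ∀ i, ∃ a : ℝ, ∃ b : ℝ, 0 < a ∧
      U i = {fun z => a * u z + b})
    (hPareto : ∀ u₀ ∈ U₀, ∃ v : Fin n → (Z → ℝ), (∀ i, v i ∈ U i) ∧
      ∃ α : Fin n → ℝ, ∃ β : ℝ, (∀ i, 0 ≤ α i) ∧ α ≠ 0 ∧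
        u₀ = fun z => (∑ i, α i * v i z) + β)
    (hParetoStar : ∀ v : Fin n → (Z → ℝ), (∀ i, v i ∈ U i) →
      ∃ u₀ ∈ U₀, ∃ α : Fin n → ℝ, ∃ β : ℝ, (∀ i, 0 ≤ α i) ∧ α ≠ 0 ∧
        u₀ = fun z => (∑ i, α i * v i z) + β) :
    (∀ u₀ ∈ U₀, ∃ a : ℝ, ∃ b : ℝ, 0 < a ∧ u₀ = fun z => a * u z + b) ∧
    (∃ u₀ ∈ U₀, ∃ a : ℝ, ∃ b : ℝ, 0 < a ∧ u = fun z => a * u₀ z + b) := by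
  choose a b ha hU using hsingleton
  have key : ∀ u₀ : Z → ℝ, (∃ v : Fin n → (Z → ℝ), (∀ i, v i ∈ U i) ∧
      ∃ α : Fin n → ℝ, ∃ β : ℝ, (∀ i, 0 ≤ α i) ∧ α ≠ 0 ∧
        u₀ = fun z => (∑ i, α i * v i z) + β) →
      ∃ A B : ℝ, 0 < A ∧ u₀ = fun z => A * u z + B := by
    rintro u₀ ⟨v, hv, α, β, hα, hαne, rfl⟩
    have hveq : ∀ i, v i = fun z => a i * u z + b i := fun i => by
      have h := hv i; rw [hU i] at h; exact h
    refine ⟨∑ i, α i * a i, (∑ i, α i * b i) + β, ?_, ?_⟩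
    · obtain ⟨j, hj⟩ : ∃ j, α j ≠ 0 := by
        by_contra h; push_neg at h; exact hαne (funext h)
      exact Finset.sum_pos' (fun i _ => mul_nonneg (hα i) (ha i).le)
        ⟨j, Finset.mem_univ j, mul_pos (lt_of_le_of_ne (hα j) (Ne.symm hj)) (ha j)⟩
    · funext z
      have h1 : ∀ i, v i z = a i * u z + b i := fun i => by rw [hveq i]
      simp only [h1, mul_add]
      rw [Finset.sum_add_distrib, Finset.sum_mul]
      ring_nf
      have e : ∑ x, u z * α x * a x = ∑ x, α x * a x * u z := Finset.sum_congr rfl (fun x _ => by ring)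
      rw [e]; ring
  constructor
  · intro u₀ hu₀
    exact key u₀ (hPareto u₀ hu₀)
  · set v : Fin n → (Z → ℝ) := fun i z => a i * u z + b i with hv
    have hvm : ∀ i, v i ∈ U i := fun i => by rw [hU i]; rfl
    obtain ⟨u₀, hu₀, α, β, hα, hαne, heq⟩ := hParetoStar v hvm
    obtain ⟨A, B, hA, hAB⟩ := key u₀ ⟨v, hvm, α, β, hα, hαne, heq⟩
    refine ⟨u₀, hu₀, 1 / A, -B / A, by positivity, ?_⟩
    funext z
    have : u₀ z = A * u z + B := by rw [hAB]
    rw [this]; field_simp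
    ring
end
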